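/- arXiv:1312.7820 — 2 statements merged into one kernel-verified Lean document; each statement's English description precedes it below -/
import Mathlib

section
/- Let v ∈ O₃⁺ and ω ∈ ℝ. The arithmetical discrete plane P(v,ω) is 2-connected if and only if P(F(v), ω − v₁) is 2-connected; consequently Ω(v) = Ω(F(v)) + v₁. Moreover, if v ∈ F₃ then Ω(v) = Σ_{n=0}^∞ v₁⁽ⁿ⁾ = ‖v‖₁/2. -/
open Matrix
open scoped Classical

noncomputable section

abbrev Z3 := Fin 3 → ℤ
abbrev R3 := Fin 3 → ℝ

/-- The inner product `⟨x, v⟩` of an integer vector with a real vector. -/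
def dot3 (x : Z3) (v : R3) : ℝ := ∑ i, (x i : ℝ) * v i

/-- Two points of `ℤ³` are 2-adjacent if `‖x − y‖₁ = 1`. -/
def adj3 (x y : Z3) : Prop := (∑ i, |x i - y i|) = 1

/-- A subset of `ℤ³` is 2-connected if it is nonempty and any two of its points are
joined by a finite chain of points of the set with consecutive points 2-adjacent. -/
def Connected3 (A : Set Z3) : Prop :=
  A.Nonempty ∧ ∀ x ∈ A, ∀ y ∈ A,
    Relation.ReflTransGen (fun a b => b ∈ A ∧ adj3 a b) x y

/-- The arithmetical discrete plane `P(v, ω)`. -/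
def Plane (v : R3) (ω : ℝ) : Set Z3 := {x | 0 ≤ dot3 x v ∧ dot3 x v < ω}

/-- The connecting thickness `Ω(v)`. -/
def omegaConn (v : R3) : ℝ := sInf {ω : ℝ | 0 ≤ ω ∧ Connected3 (Plane v ω)}

/-- `O₃⁺ = {v : 0 ≤ v₁ ≤ v₂ ≤ v₃}`. -/
def O3 : Set R3 := {v | 0 ≤ v 0 ∧ v 0 ≤ v 1 ∧ v 1 ≤ v 2}

/-- The ordered fully subtractive map. -/
def FS (v : R3) : R3 :=
  if v 0 ≤ v 1 - v 0 ∧ v 1 - v 0 ≤ v 2 - v 0 then ![v 0, v 1 - v 0, v 2 - v 0]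
  else if v 1 - v 0 < v 0 ∧ v 0 ≤ v 2 - v 0 then ![v 1 - v 0, v 0, v 2 - v 0]
  else ![v 1 - v 0, v 2 - v 0, v 0]

/-- `F₃ = {v ∈ O₃⁺ : v₁⁽ⁿ⁾ + v₂⁽ⁿ⁾ > v₃⁽ⁿ⁾ for all n}`. -/
def F3set : Set R3 :=
  {v | v ∈ O3 ∧ ∀ n : ℕ, (FS^[n] v) 2 < (FS^[n] v) 0 + (FS^[n] v) 1}

/-- Branch index of `F` at `v`: values `0, 1, 2` encode the branches labelled `1, 2, 3`. -/
def FSidx (v : R3) : Fin 3 :=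
  if v 0 ≤ v 1 - v 0 ∧ v 1 - v 0 ≤ v 2 - v 0 then 0
  else if v 1 - v 0 < v 0 ∧ v 0 ≤ v 2 - v 0 then 1
  else 2

/-- The matrices `M₁, M₂, M₃` of the fully subtractive algorithm. -/
def Mmat : Fin 3 → Matrix (Fin 3) (Fin 3) ℤ :=
  ![!![1,0,0; 1,1,0; 1,0,1], !![0,1,0; 1,1,0; 0,1,1], !![0,0,1; 1,0,1; 0,1,1]]

def e1 : Z3 := ![1,0,0]

/-- The product `M₁ ⋯ Mₙ` of the matrices associated with the F-expansion of `v`. -/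
def prodM (v : R3) (n : ℕ) : Matrix (Fin 3) (Fin 3) ℤ :=
  ((List.range n).map (fun j => Mmat (FSidx (FS^[j] v)))).prod

/-- The translation vector `((M₁⋯Mₙ)ᵀ)⁻¹ · e₁`. -/
def transVec (v : R3) (n : ℕ) : Z3 := ((prodM v n)ᵀ)⁻¹ *ᵥ e1

/-- The sequence `Tₙ` of subsets of `ℤ³`: `T₀ = {0}`, `T_{n+1} = Tₙ ∪ (Tₙ + ((M₁⋯Mₙ)ᵀ)⁻¹·e₁)`
(so that `T₁ = {0, e₁}`, the empty matrix product being the identity). -/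
def Tseq (v : R3) : ℕ → Set Z3
  | 0 => {0}
  | n + 1 => Tseq v n ∪ ((fun x => x + transVec v n) '' Tseq v n)

/-!
The shear `x ↦ (x₀ + x₁ + x₂, x₁, x₂)` carries `P(v, ω)` with its unit moves onto `P(w, ω)`,
`w = (v₀, v₁ − v₀, v₂ − v₀)`, with the moves `e₀`, `e₀ + e₁`, `e₀ + e₂`, each of height at least
`w₀ = v₀`. Connectedness of this plane, and also connectedness of `P(w, ω − v₀)`, forces a gap:
no lattice point has height in `[ω − v₀, v₀)`. Given the gap, the thick plane is the thin one
together with its translate by `e₀`, and chains of either kind of moves translate into chains of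
the other. As `F(v)` is `w` up to a permutation of coordinates, this is the first claim, and the
second follows by taking infima. Iterating, `Ω(v) = Σ_{j<n} v₀⁽ʲ⁾ + Ω(v⁽ⁿ⁾)` and
`‖v⁽ⁿ⁾‖₁ = ‖v‖₁ − 2 Σ_{j<n} v₀⁽ʲ⁾`; on `F₃` the orbit tends to `0`, and `0 ≤ Ω(u) ≤ 2‖u‖₁`
then gives `Ω(v) = ‖v‖₁ / 2`.
-/

open Filter Topology Relation

section Moves

variable {G G' ι κ : Type*} [AddCommGroup G] [AddCommGroup G']

def MoveStep (r : ι → G) (A : Set G) (p q : G) : Prop :=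
  q ∈ A ∧ ∃ i, q = p + r i ∨ q = p - r i

def ConnectedVia (r : ι → G) (A : Set G) : Prop :=
  A.Nonempty ∧ ∀ x ∈ A, ∀ y ∈ A, ReflTransGen (MoveStep r A) x y

variable {r : ι → G} {A : Set G}

lemma mem_of_reflTransGen_moveStep {x y : G} (hx : x ∈ A)
    (h : ReflTransGen (MoveStep r A) x y) : y ∈ A := by
  rcases h.cases_tail with rfl | ⟨_, _, hy, _⟩
  exacts [hx, hy]

lemma moveStep_symm {p q : G} (hp : p ∈ A) (h : MoveStep r A p q) : MoveStep r A q p := by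
  obtain ⟨-, i, rfl | rfl⟩ := h
  · exact ⟨hp, i, Or.inr (add_sub_cancel_right p (r i)).symm⟩
  · exact ⟨hp, i, Or.inl (sub_add_cancel p (r i)).symm⟩

lemma reflTransGen_moveStep_symm {x y : G} (hx : x ∈ A)
    (h : ReflTransGen (MoveStep r A) x y) : ReflTransGen (MoveStep r A) y x := by
  induction h with
  | refl => exact .refl
  | tail hxb hbc ih =>
    exact .head (moveStep_symm (mem_of_reflTransGen_moveStep hx hxb) hbc) ih

lemma reflTransGen_map_moveStep {r' : κ → G} {B : Set G} (g : G → G)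
    (hg : ∀ p ∈ A, g p ∈ B)
    (hstep : ∀ p ∈ A, ∀ i, p + r i ∈ A → ReflTransGen (MoveStep r' B) (g p) (g (p + r i)))
    {x y : G} (hx : x ∈ A) (h : ReflTransGen (MoveStep r A) x y) :
    ReflTransGen (MoveStep r' B) (g x) (g y) := by
  induction h with
  | refl => exact .refl
  | @tail b c hxb hbc ih =>
    have hb := mem_of_reflTransGen_moveStep hx hxb
    obtain ⟨hc, i, rfl | rfl⟩ := hbc
    · exact ih.trans (hstep b hb i hc)
    · have hback := hstep _ hc i (by rwa [sub_add_cancel])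
      rw [sub_add_cancel] at hback
      exact ih.trans (reflTransGen_moveStep_symm (hg _ hc) hback)

lemma ConnectedVia.eq_of_isolated (hA : ConnectedVia r A) {z : G} (hz : z ∈ A)
    (hiso : ∀ i, z + r i ∉ A ∧ z - r i ∉ A) {y : G} (hy : y ∈ A) : y = z := by
  rcases (hA.2 z hz y hy).cases_head with rfl | ⟨c, ⟨hc, i, rfl | rfl⟩, -⟩
  exacts [rfl, ((hiso i).1 hc).elim, ((hiso i).2 hc).elim]

lemma ConnectedVia.of_addEquiv {r' : κ → G'} {A' : Set G'} (φ : G ≃+ G')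
    (hA : ∀ x, φ x ∈ A' ↔ x ∈ A) (hr : ∀ i, ∃ j, φ (r i) = r' j) (h : ConnectedVia r A) :
    ConnectedVia r' A' := by
  have hφ : ∀ y ∈ A', ∃ x ∈ A, φ x = y := fun y hy =>
    ⟨φ.symm y, (hA _).1 (by simpa using hy), φ.apply_symm_apply y⟩
  obtain ⟨⟨x₀, hx₀⟩, hconn⟩ := h
  refine ⟨⟨φ x₀, (hA x₀).2 hx₀⟩, fun _ hx _ hy => ?_⟩
  obtain ⟨x, hxA, rfl⟩ := hφ _ hx
  obtain ⟨y, hyA, rfl⟩ := hφ _ hy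
  refine ReflTransGen.lift φ (fun p q ⟨hq, i, hpq⟩ => ?_) _ _ (hconn x hxA y hyA)
  obtain ⟨j, hj⟩ := hr i
  refine ⟨(hA q).2 hq, j, ?_⟩
  rcases hpq with rfl | rfl
  exacts [Or.inl (by rw [map_add, hj]), Or.inr (by rw [map_sub, hj])]

lemma connectedVia_congr_addEquiv {r' : κ → G'} {A' : Set G'} (φ : G ≃+ G')
    (hA : ∀ x, φ x ∈ A' ↔ x ∈ A) (hr : ∀ i, ∃ j, φ (r i) = r' j)
    (hr' : ∀ j, ∃ i, φ (r i) = r' j) : ConnectedVia r A ↔ ConnectedVia r' A' := by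
  refine ⟨ConnectedVia.of_addEquiv φ hA hr, ConnectedVia.of_addEquiv φ.symm
    (fun y => by rw [← hA, φ.apply_symm_apply]) fun j => ?_⟩
  obtain ⟨i, hi⟩ := hr' j
  exact ⟨i, by rw [← hi, φ.symm_apply_apply]⟩

end Moves

section Planes

@[simp] lemma dot3_add (x y : Z3) (v : R3) : dot3 (x + y) v = dot3 x v + dot3 y v := by
  simp [dot3, add_mul, Finset.sum_add_distrib]

@[simp] lemma dot3_sub (x y : Z3) (v : R3) : dot3 (x - y) v = dot3 x v - dot3 y v := by
  simp [dot3, sub_mul, Finset.sum_sub_distrib]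

@[simp] lemma dot3_zsmul (n : ℤ) (x : Z3) (v : R3) : dot3 (n • x) v = n * dot3 x v := by
  simp [dot3, Finset.mul_sum, mul_assoc]

@[simp] lemma dot3_single (m : Fin 3) (v : R3) : dot3 (Pi.single m 1) v = v m := by
  simp [dot3, Pi.single_apply]

lemma mem_plane {v : R3} {ω : ℝ} {x : Z3} : x ∈ Plane v ω ↔ 0 ≤ dot3 x v ∧ dot3 x v < ω :=
  Iff.rfl

lemma zero_mem_plane {v : R3} {ω : ℝ} (hω : 0 < ω) : (0 : Z3) ∈ Plane v ω := by
  simpa [mem_plane, dot3] using hω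

lemma pos_of_mem_plane {v : R3} {ω : ℝ} {x : Z3} (hx : x ∈ Plane v ω) : 0 < ω :=
  hx.1.trans_lt hx.2

lemma adj3_iff {x y : Z3} : adj3 x y ↔ ∃ m, y = x + Pi.single m 1 ∨ y = x - Pi.single m 1 := by
  constructor
  · intro h
    simp only [adj3, Fin.sum_univ_three] at h
    have := abs_cases (x 0 - y 0); have := abs_cases (x 1 - y 1); have := abs_cases (x 2 - y 2)
    have key : (y 0 = x 0 + 1 ∨ y 0 = x 0 - 1) ∧ y 1 = x 1 ∧ y 2 = x 2 ∨
        (y 1 = x 1 + 1 ∨ y 1 = x 1 - 1) ∧ y 0 = x 0 ∧ y 2 = x 2 ∨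
        (y 2 = x 2 + 1 ∨ y 2 = x 2 - 1) ∧ y 0 = x 0 ∧ y 1 = x 1 := by omega
    rcases key with ⟨h | h, h', h''⟩ | ⟨h | h, h', h''⟩ | ⟨h | h, h', h''⟩
      <;> [refine ⟨0, .inl ?_⟩; refine ⟨0, .inr ?_⟩; refine ⟨1, .inl ?_⟩;
        refine ⟨1, .inr ?_⟩; refine ⟨2, .inl ?_⟩; refine ⟨2, .inr ?_⟩]
    all_goals ext i; fin_cases i <;> simp [h, h', h'']
  · rintro ⟨m, rfl | rfl⟩ <;> fin_cases m <;> simp [adj3, Fin.sum_univ_three, Pi.single_apply]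

lemma connected3_iff_connectedVia {A : Set Z3} :
    Connected3 A ↔ ConnectedVia (fun m : Fin 3 => (Pi.single m 1 : Z3)) A := by
  simp only [Connected3, adj3_iff]
  rfl

end Planes

lemma exists_int_mul_add_int_mul_mem_Ico (a : ℝ) {γ ε : ℝ} (hγ : γ ≠ 0) (hε : 0 < ε) :
    ∃ q m : ℤ, m ≠ 0 ∧ 0 ≤ q * γ + m * a ∧ q * γ + m * a < ε := by
  rcases (AddSubgroup.closure {γ, a}).dense_or_cyclic with hdense | ⟨g, hg⟩
  · obtain ⟨η, hη, hη0, hηε⟩ := hdense.exists_between hε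
    obtain ⟨q, m, rfl⟩ := AddSubgroup.mem_closure_pair.1 hη
    simp only [zsmul_eq_mul] at hη0 hηε
    by_cases hm : m = 0
    · -- the first multiple of `η = q γ` reaching `a` overshoots it by less than `η < ε`
      subst hm
      simp only [Int.cast_zero, zero_mul, add_zero] at hη0 hηε
      have hceil := Int.le_ceil (a / (q * γ))
      have hceil' := sub_lt_iff_lt_add.2 (Int.ceil_lt_add_one (a / (q * γ)))
      rw [div_le_iff₀ hη0] at hceil
      rw [lt_div_iff₀ hη0] at hceil'
      refine ⟨⌈a / (q * γ)⌉ * q, -1, by norm_num, ?_, ?_⟩ <;> push_cast <;> nlinarith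
    · exact ⟨q, m, hm, hη0.le, hηε⟩
  · have hmem : ∀ x ∈ ({γ, a} : Set ℝ), ∃ n : ℤ, n • g = x := fun x hx =>
      AddSubgroup.mem_closure_singleton.1 (hg ▸ AddSubgroup.subset_closure hx)
    obtain ⟨P, rfl⟩ := hmem γ (by simp)
    obtain ⟨N, hN⟩ := hmem a (by simp)
    have hP : P ≠ 0 := by rintro rfl; exact hγ (zero_zsmul g)
    have hzero : (N : ℝ) * (P • g) + (-P : ℤ) * a = 0 := by
      rw [← hN]; simp only [zsmul_eq_mul]; push_cast; ring
    exact ⟨N, -P, neg_ne_zero.2 hP, hzero.ge, hzero ▸ hε⟩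

section Gap

variable {w : R3} {k : Fin 3}

lemma exists_mem_plane_ne_zero (hw : w ≠ 0) {ω : ℝ} (hω : 0 < ω) :
    ∃ p ∈ Plane w ω, p ≠ 0 := by
  obtain ⟨j, hj⟩ := Function.ne_iff.1 hw
  have hij : j + 1 ≠ j := by fin_cases j <;> decide
  obtain ⟨q, m, hm, h0, hω'⟩ := exists_int_mul_add_int_mul_mem_Ico (w (j + 1)) hj hω
  refine ⟨q • Pi.single j 1 + m • Pi.single (j + 1) 1, ?_, fun h => hm ?_⟩
  · simpa only [mem_plane, dot3_add, dot3_zsmul, dot3_single] using ⟨h0, hω'⟩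
  · simpa [hij] using congrFun h (j + 1)

lemma coord_eq_zero_of_connected3 {ε : ℝ} (hB : Connected3 (Plane w ε)) (hk : ε ≤ w k)
    {x : Z3} (hx : x ∈ Plane w ε) : x k = 0 := by
  rw [connected3_iff_connectedVia] at hB
  have h0 := zero_mem_plane (v := w) (pos_of_mem_plane hx)
  induction hB.2 0 h0 x hx with
  | refl => rfl
  | @tail b c h0b hbc ih =>
    have hb := mem_of_reflTransGen_moveStep h0 h0b
    obtain ⟨hc, m, rfl | rfl⟩ := hbc <;> obtain rfl | hmk := eq_or_ne m k
    · have := hb.1; have := hc.2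
      simp only [dot3_add, dot3_single] at *
      linarith
    · simp [ih hb, hmk.symm]
    · have := hb.2; have := hc.1
      simp only [dot3_sub, dot3_single] at *
      linarith
    · simp [ih hb, hmk.symm]

/-- Connectedness of `P(w, ε)` leaves no value of `⟨·, w⟩` in `[ε, w k)`: otherwise the values
`ℤ w k + ℤ γ`, with `γ` the value of `z - z k • e k`, would put a point with nonzero `k`-th
coordinate into `P(w, ε)`, which the unit moves of length `w k ≥ ε` cannot reach from `0`. -/
lemma not_mem_Ico_of_connected3 {ε : ℝ} (hB : Connected3 (Plane w ε)) (z : Z3) :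
    ¬ (ε ≤ dot3 z w ∧ dot3 z w < w k) := by
  rintro ⟨h1, h2⟩
  obtain ⟨x, hx⟩ := hB.1
  have hε := pos_of_mem_plane hx
  set u := z - z k • (Pi.single k 1 : Z3)
  have huk : u k = 0 := by simp [u]
  have hu : dot3 u w = dot3 z w - z k * w k := by simp only [u, dot3_sub, dot3_zsmul, dot3_single]
  have hγ : dot3 u w ≠ 0 := by
    rw [hu, sub_ne_zero]
    rintro hz
    rcases le_or_gt (z k) 0 with hzk | hzk
    · have : (z k : ℝ) ≤ 0 := by exact_mod_cast hzk
      nlinarith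
    · have : (1 : ℝ) ≤ z k := by exact_mod_cast hzk
      nlinarith
  obtain ⟨q, m, hm, h0, hlt⟩ := exists_int_mul_add_int_mul_mem_Ico (w k) hγ hε
  have hp : q • u + m • Pi.single k 1 ∈ Plane w ε := by
    simpa only [mem_plane, dot3_add, dot3_zsmul, dot3_single] using ⟨h0, hlt⟩
  have hpk := coord_eq_zero_of_connected3 hB (by linarith) hp
  simp only [Pi.add_apply, Pi.smul_apply, huk, Pi.single_eq_same, smul_eq_mul] at hpk
  exact hm (by simpa using hpk)

end Gap

section Lift

def shearMove (k m : Fin 3) : Z3 :=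
  if m = k then Pi.single k 1 else Pi.single k 1 + Pi.single m 1

variable {w : R3} {k : Fin 3} {ω : ℝ}

lemma shearMove_sub_single (k m : Fin 3) :
    shearMove k m - Pi.single k 1 = if m = k then 0 else Pi.single m 1 := by
  unfold shearMove; split_ifs <;> simp

lemma le_dot3_shearMove (hw : ∀ i, 0 ≤ w i) (m : Fin 3) : w k ≤ dot3 (shearMove k m) w := by
  unfold shearMove; split_ifs <;> simp [hw m]

def HeightGap (w : R3) (k : Fin 3) (ω : ℝ) : Prop :=
  ∀ p ∈ Plane w ω, ω - w k ≤ dot3 p w → w k ≤ dot3 p w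

def foldDown (w : R3) (k : Fin 3) (ω : ℝ) (p : Z3) : Z3 :=
  if dot3 p w < ω - w k then p else p - Pi.single k 1

lemma foldDown_mem (hgap : HeightGap w k ω) {p : Z3} (hp : p ∈ Plane w ω) :
    foldDown w k ω p ∈ Plane w (ω - w k) := by
  unfold foldDown
  split_ifs with h
  · exact ⟨hp.1, h⟩
  · have := hgap p hp (not_lt.1 h)
    simp only [mem_plane, dot3_sub, dot3_single]
    constructor <;> linarith [hp.2]

lemma heightGap_of_connectedVia_shearMove (hw : ∀ i, 0 ≤ w i)
    (hA : ConnectedVia (shearMove k) (Plane w ω)) : HeightGap w k ω := by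
  intro z hz hhigh
  by_contra! hlow
  have hiso : ∀ m, z + shearMove k m ∉ Plane w ω ∧ z - shearMove k m ∉ Plane w ω := fun m => by
    have := le_dot3_shearMove hw (k := k) m
    simp only [mem_plane, dot3_add, dot3_sub, not_and_or, not_le, not_lt]
    constructor <;> [right; left] <;> linarith
  have hw0 : w ≠ 0 := by rintro rfl; exact lt_irrefl 0 (hz.1.trans_lt hlow)
  obtain ⟨p, hp, hp0⟩ := exists_mem_plane_ne_zero hw0 (pos_of_mem_plane hz)
  exact hp0 ((hA.eq_of_isolated hz hiso hp).trans
    (hA.eq_of_isolated hz hiso (zero_mem_plane (pos_of_mem_plane hz))).symm)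

lemma heightGap_of_connected3 (hB : Connected3 (Plane w (ω - w k))) : HeightGap w k ω :=
  fun p _ hhigh => not_lt.1 fun hlow => not_mem_Ico_of_connected3 hB p ⟨hhigh, hlow⟩

lemma connected3_of_connectedVia_shearMove (hw : ∀ i, 0 ≤ w i)
    (hA : ConnectedVia (shearMove k) (Plane w ω)) : Connected3 (Plane w (ω - w k)) := by
  have hgap := heightGap_of_connectedVia_shearMove hw hA
  have hBA : ∀ p ∈ Plane w (ω - w k), p ∈ Plane w ω := fun p hp => ⟨hp.1, by linarith [hp.2, hw k]⟩
  rw [connected3_iff_connectedVia]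
  obtain ⟨p, hp⟩ := hA.1
  refine ⟨⟨_, foldDown_mem hgap hp⟩, fun x hx y hy => ?_⟩
  have hfold : ∀ p ∈ Plane w (ω - w k), foldDown w k ω p = p := fun p hp => if_pos hp.2
  rw [← hfold x hx, ← hfold y hy]
  refine reflTransGen_map_moveStep _ (fun p => foldDown_mem hgap) (fun p hp m hq => ?_)
    (hBA x hx) (hA.2 _ (hBA x hx) _ (hBA y hy))
  -- the move climbs by at least `w k`, so it starts in the thin plane; it ends one `e k` above
  -- `p + (shearMove k m - e k)`, which is `p` or a unit move away from it
  have hclimb := le_dot3_shearMove hw (k := k) m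
  have hq' := hq.2
  simp only [dot3_add] at hq'
  rw [hfold p ⟨hp.1, by linarith⟩]
  have hmid : p + shearMove k m - Pi.single k 1 ∈ Plane w (ω - w k) := by
    simp only [mem_plane, dot3_sub, dot3_add, dot3_single]
    constructor <;> linarith [hp.1]
  have hstart : ReflTransGen (MoveStep (fun m => Pi.single m 1) (Plane w (ω - w k)))
      p (p + shearMove k m - Pi.single k 1) := by
    rw [add_sub_assoc, shearMove_sub_single] at hmid ⊢
    split_ifs at hmid ⊢
    · rw [add_zero]
    · exact .single ⟨hmid, m, Or.inl rfl⟩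
  refine hstart.trans ?_
  unfold foldDown
  split_ifs with hlow
  · exact .single ⟨⟨hq.1, hlow⟩, k, Or.inl (sub_add_cancel _ _).symm⟩
  · exact .refl

lemma connectedVia_shearMove_of_connected3 (hw : ∀ i, 0 ≤ w i)
    (hB : Connected3 (Plane w (ω - w k))) : ConnectedVia (shearMove k) (Plane w ω) := by
  have hgap := heightGap_of_connected3 hB
  have hBA : ∀ p ∈ Plane w (ω - w k), p ∈ Plane w ω := fun p hp => ⟨hp.1, by linarith [hp.2, hw k]⟩
  have hkk : shearMove k k = Pi.single k 1 := if_pos rfl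
  have hreach : ∀ p ∈ Plane w ω,
      ReflTransGen (MoveStep (shearMove k) (Plane w ω)) (foldDown w k ω p) p := fun p hp => by
    unfold foldDown
    split_ifs
    · exact .refl
    · exact .single ⟨hp, k, Or.inl (by rw [hkk, sub_add_cancel])⟩
  rw [connected3_iff_connectedVia] at hB
  obtain ⟨x₀, hx₀⟩ := hB.1
  refine ⟨⟨x₀, hBA x₀ hx₀⟩, fun x hx y hy => ?_⟩
  have hx' := foldDown_mem hgap hx
  have hy' := foldDown_mem hgap hy
  refine (reflTransGen_moveStep_symm (hBA _ hx') (hreach x hx)).trans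
    (.trans ?_ (hreach y hy))
  refine reflTransGen_map_moveStep id hBA (fun p hp m hq => ?_) hx' (hB.2 _ hx' _ hy')
  obtain rfl | hmk := eq_or_ne m k
  · exact .single ⟨hBA _ hq, m, Or.inl (by rw [hkk]; rfl)⟩
  have hsm : shearMove k m = Pi.single k 1 + Pi.single m 1 := if_neg hmk
  have hmid : p + shearMove k m ∈ Plane w ω := by
    have := hq.2
    simp only [mem_plane, dot3_add, dot3_single, hsm] at this ⊢
    constructor <;> linarith [hp.1, hw k, hw m]
  refine .head ⟨hmid, m, Or.inl rfl⟩ (.single ⟨hBA _ hq, k, Or.inr ?_⟩)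
  simp only [id, hkk, hsm]
  abel

theorem connectedVia_shearMove_iff (hw : ∀ i, 0 ≤ w i) :
    ConnectedVia (shearMove k) (Plane w ω) ↔ Connected3 (Plane w (ω - w k)) :=
  ⟨connected3_of_connectedVia_shearMove hw, connectedVia_shearMove_of_connected3 hw⟩

end Lift

section FullySubtractive

def subFirst (v : R3) : R3 := ![v 0, v 1 - v 0, v 2 - v 0]

def shearEquiv : Z3 ≃+ Z3 where
  toFun x := ![x 0 + x 1 + x 2, x 1, x 2]
  invFun y := ![y 0 - y 1 - y 2, y 1, y 2]
  left_inv x := by ext i; fin_cases i <;> simp; ring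
  right_inv y := by ext i; fin_cases i <;> simp; ring
  map_add' x y := by ext i; fin_cases i <;> simp; ring

lemma dot3_shearEquiv (x : Z3) (v : R3) : dot3 (shearEquiv x) (subFirst v) = dot3 x v := by
  simp [shearEquiv, subFirst, dot3, Fin.sum_univ_three]
  ring

lemma shearEquiv_single (m : Fin 3) : shearEquiv (Pi.single m 1) = shearMove 0 m := by
  ext i; fin_cases m <;> fin_cases i <;> simp [shearEquiv, shearMove]

lemma connected3_iff_connectedVia_shearMove (v : R3) (ω : ℝ) :
    Connected3 (Plane v ω) ↔ ConnectedVia (shearMove 0) (Plane (subFirst v) ω) := by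
  rw [connected3_iff_connectedVia]
  exact connectedVia_congr_addEquiv shearEquiv (fun x => by simp [mem_plane, dot3_shearEquiv])
    (fun m => ⟨m, shearEquiv_single m⟩) (fun m => ⟨m, shearEquiv_single m⟩)

lemma connected3_plane_comp_perm (w : R3) (σ : Equiv.Perm (Fin 3)) (ω : ℝ) :
    Connected3 (Plane (w ∘ σ) ω) ↔ Connected3 (Plane w ω) := by
  rw [connected3_iff_connectedVia, connected3_iff_connectedVia]
  refine (connectedVia_congr_addEquiv (LinearEquiv.funCongrLeft ℤ ℤ σ).toAddEquiv
    (fun x => ?_) (fun m => ⟨σ.symm m, ?_⟩) (fun m => ⟨σ m, ?_⟩)).symm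
  · simp [mem_plane, dot3, LinearMap.funLeft, Equiv.sum_comp σ (fun i => (x i : ℝ) * w i)]
  all_goals ext i; simp [LinearMap.funLeft, Pi.single_apply, Equiv.eq_symm_apply]

lemma FS_eq_subFirst_comp (v : R3) : ∃ σ : Equiv.Perm (Fin 3), FS v = subFirst v ∘ σ := by
  unfold FS
  split_ifs
  · exact ⟨1, rfl⟩
  · refine ⟨Equiv.swap 0 1, ?_⟩
    ext i; fin_cases i <;> rfl
  · refine ⟨finRotate 3, ?_⟩
    ext i; fin_cases i <;> rfl

lemma FS_mem_O3 {v : R3} (hv : v ∈ O3) : FS v ∈ O3 := by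
  obtain ⟨h0, h01, h12⟩ := hv
  unfold FS
  split_ifs <;> refine ⟨?_, ?_, ?_⟩ <;> simp <;> grind

lemma sum_FS (v : R3) : ∑ i, FS v i = ∑ i, v i - 2 * v 0 := by
  obtain ⟨σ, hσ⟩ := FS_eq_subFirst_comp v
  rw [hσ, Function.comp_def, Equiv.sum_comp σ (subFirst v)]
  simp [subFirst, Fin.sum_univ_three]
  ring

lemma FS_two_le {v : R3} (hv : v ∈ O3) : FS v 2 ≤ v 2 := by
  obtain ⟨h0, h01, h12⟩ := hv
  unfold FS
  split_ifs <;> simp <;> linarith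

lemma FS_zero_eq {v : R3} (hv : v ∈ O3) (hsmall : 3 * v 0 ≤ v 2) (hF : v 2 < v 0 + v 1) :
    FS v 0 = v 0 := by
  rw [FS, if_pos ⟨by linarith, by linarith [hv.2.2]⟩]
  rfl

theorem connected3_plane_iff_FS {v : R3} (hv : v ∈ O3) (ω : ℝ) :
    Connected3 (Plane v ω) ↔ Connected3 (Plane (FS v) (ω - v 0)) := by
  obtain ⟨h0, h01, h12⟩ := hv
  have hw : ∀ i, 0 ≤ subFirst v i := fun i => by
    fin_cases i <;> simp [subFirst] <;> linarith
  obtain ⟨σ, hσ⟩ := FS_eq_subFirst_comp v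
  rw [hσ, connected3_plane_comp_perm, connected3_iff_connectedVia_shearMove,
    connectedVia_shearMove_iff hw]
  rfl

end FullySubtractive

section ThickPlanes

variable {u : R3} {ω : ℝ}

lemma sum_abs_sub_single_add_one {x : Z3} {m : Fin 3} (h : 0 < x m) :
    ∑ i, |(x - Pi.single m 1 : Z3) i| + 1 = ∑ i, |x i| := by
  have h' : |x m - 1| = |x m| - 1 := by rw [abs_of_pos h, abs_of_nonneg (by omega)]
  fin_cases m <;> simp_all [Fin.sum_univ_three] <;> ring

lemma sum_abs_add_single_add_one {x : Z3} {m : Fin 3} (h : x m < 0) :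
    ∑ i, |(x + Pi.single m 1 : Z3) i| + 1 = ∑ i, |x i| := by
  have h' : |x m + 1| = |x m| - 1 := by rw [abs_of_neg h, abs_of_nonpos (by omega)]; ring
  fin_cases m <;> simp_all [Fin.sum_univ_three] <;> ring

lemma exists_moveStep_toward_zero (hu : ∀ i, 0 ≤ u i) (hω : 2 * ∑ i, u i ≤ ω) {x : Z3}
    (hx : x ∈ Plane u ω) (hx0 : x ≠ 0) :
    ∃ m, (0 < x m ∧ x - Pi.single m 1 ∈ Plane u ω) ∨ (x m < 0 ∧ x + Pi.single m 1 ∈ Plane u ω) := by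
  have hle_sum : ∀ m, u m ≤ ∑ i, u i := fun m =>
    Finset.single_le_sum (fun i _ => hu i) (Finset.mem_univ m)
  obtain ⟨hx1, hx2⟩ := hx
  by_cases hdown : ∃ m, 0 < x m ∧ u m ≤ dot3 x u
  · obtain ⟨m, hm, hum⟩ := hdown
    refine ⟨m, .inl ⟨hm, ?_⟩⟩
    simp only [mem_plane, dot3_sub, dot3_single]
    constructor <;> linarith [hu m]
  by_cases hup : ∃ m, x m < 0 ∧ dot3 x u + u m < ω
  · obtain ⟨m, hm, hum⟩ := hup
    refine ⟨m, .inr ⟨hm, ?_⟩⟩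
    simp only [mem_plane, dot3_add, dot3_single]
    constructor <;> linarith [hu m]
  push Not at hdown hup
  exfalso
  by_cases hneg : ∃ m, x m < 0
  · -- then `⟨x, u⟩ ≥ ω - u m ≥ ‖u‖₁`, so no coordinate of `x` is positive and `⟨x, u⟩ ≤ 0`
    obtain ⟨m, hm⟩ := hneg
    have hbig := hup m hm
    have hnonpos : ∀ i, x i ≤ 0 := fun i =>
      not_lt.1 fun hi => by linarith [hdown i hi, hle_sum i, hle_sum m]
    have : dot3 x u ≤ 0 := Finset.sum_nonpos fun i _ =>
      mul_nonpos_of_nonpos_of_nonneg (by exact_mod_cast hnonpos i) (hu i)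
    linarith [hle_sum m]
  · push Not at hneg
    obtain ⟨m, hm⟩ : ∃ m, x m ≠ 0 := Function.ne_iff.1 hx0
    have hm : 1 ≤ x m := by have := hneg m; omega
    have : (x m : ℝ) * u m ≤ dot3 x u := Finset.single_le_sum
      (f := fun i => (x i : ℝ) * u i) (fun i _ => mul_nonneg (by exact_mod_cast hneg i) (hu i))
      (Finset.mem_univ m)
    have : u m ≤ (x m : ℝ) * u m := le_mul_of_one_le_left (hu m) (by exact_mod_cast hm)
    linarith [hdown m (by omega)]

lemma reflTransGen_zero_of_mem_thick (hu : ∀ i, 0 ≤ u i) (hω : 2 * ∑ i, u i ≤ ω) (n : ℕ) :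
    ∀ x ∈ Plane u ω, ∑ i, |x i| = n →
      ReflTransGen (MoveStep (fun m => Pi.single m 1) (Plane u ω)) x 0 := by
  induction n with
  | zero =>
    intro x _ hn
    have : x = 0 := funext fun i => abs_eq_zero.1 <|
      (Finset.sum_eq_zero_iff_of_nonneg fun i _ => abs_nonneg (x i)).1 hn i (Finset.mem_univ i)
    rw [this]
  | succ n ih =>
    intro x hx hn
    have hx0 : x ≠ 0 := by rintro rfl; simp at hn; omega
    obtain ⟨m, ⟨hm, hmem⟩ | ⟨hm, hmem⟩⟩ := exists_moveStep_toward_zero hu hω hx hx0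
    · refine .head ⟨hmem, m, .inr rfl⟩ (ih _ hmem ?_)
      have := sum_abs_sub_single_add_one hm
      omega
    · refine .head ⟨hmem, m, .inl rfl⟩ (ih _ hmem ?_)
      have := sum_abs_add_single_add_one hm
      omega

theorem connected3_plane_of_two_mul_sum_le (hu : ∀ i, 0 ≤ u i) (hω0 : 0 < ω)
    (hω : 2 * ∑ i, u i ≤ ω) : Connected3 (Plane u ω) := by
  rw [connected3_iff_connectedVia]
  have hreach : ∀ x ∈ Plane u ω,
      ReflTransGen (MoveStep (fun m => Pi.single m 1) (Plane u ω)) x 0 := fun x hx =>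
    reflTransGen_zero_of_mem_thick hu hω _ x hx (Int.toNat_of_nonneg
      (Finset.sum_nonneg fun i _ => abs_nonneg (x i))).symm
  exact ⟨⟨0, zero_mem_plane hω0⟩, fun x hx y hy =>
    (hreach x hx).trans (reflTransGen_moveStep_symm hy (hreach y hy))⟩

end ThickPlanes

section ConnectingThickness

lemma nonneg_of_mem_O3 {v : R3} (hv : v ∈ O3) (i : Fin 3) : 0 ≤ v i := by
  obtain ⟨h0, h01, h12⟩ := hv
  fin_cases i <;> simp <;> linarith

lemma omegaConn_eq_sInf (v : R3) : omegaConn v = sInf {ω | Connected3 (Plane v ω)} := by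
  refine congrArg sInf (Set.ext fun ω => and_iff_right_of_imp fun h => ?_)
  obtain ⟨x, hx⟩ := h.1
  exact (pos_of_mem_plane hx).le

lemma bddBelow_connected3 (v : R3) : BddBelow {ω | Connected3 (Plane v ω)} :=
  ⟨0, fun _ h => (pos_of_mem_plane h.1.some_mem).le⟩

lemma omegaConn_nonneg (v : R3) : 0 ≤ omegaConn v :=
  Real.sInf_nonneg fun _ h => h.1

lemma omegaConn_le_two_mul_sum {u : R3} (hu : ∀ i, 0 ≤ u i) : omegaConn u ≤ 2 * ∑ i, u i := by
  rw [omegaConn_eq_sInf]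
  refine le_of_forall_pos_le_add fun ε hε => csInf_le (bddBelow_connected3 u) ?_
  have : 0 ≤ ∑ i, u i := Finset.sum_nonneg fun i _ => hu i
  exact connected3_plane_of_two_mul_sum_le hu (by linarith) (by linarith)

theorem omegaConn_eq_omegaConn_FS_add {v : R3} (hv : v ∈ O3) :
    omegaConn v = omegaConn (FS v) + v 0 := by
  have hw := nonneg_of_mem_O3 (FS_mem_O3 hv)
  have himage : {ω | Connected3 (Plane v ω)} =
      OrderIso.addRight (v 0) '' {ω | Connected3 (Plane (FS v) ω)} := by
    ext ω
    simp only [Set.mem_ofPred_eq, connected3_plane_iff_FS hv, Set.mem_image,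
      OrderIso.addRight_apply]
    exact ⟨fun h => ⟨ω - v 0, h, sub_add_cancel ω (v 0)⟩, by rintro ⟨t, ht, rfl⟩; simpa using ht⟩
  have hne : {ω | Connected3 (Plane (FS v) ω)}.Nonempty := by
    have : 0 ≤ ∑ i, FS v i := Finset.sum_nonneg fun i _ => hw i
    exact ⟨2 * ∑ i, FS v i + 1, connected3_plane_of_two_mul_sum_le hw (by linarith) (by linarith)⟩
  rw [omegaConn_eq_sInf, omegaConn_eq_sInf, himage,
    ← OrderIso.map_csInf' _ hne (bddBelow_connected3 _)]
  rfl

end ConnectingThickness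

section FullySubtractiveOrbit

variable {v : R3}

lemma iterate_FS_mem_O3 (hv : v ∈ O3) (n : ℕ) : FS^[n] v ∈ O3 := by
  induction n with
  | zero => exact hv
  | succ n ih => rw [Function.iterate_succ_apply']; exact FS_mem_O3 ih

lemma sum_range_iterate_FS_zero (v : R3) (n : ℕ) :
    ∑ j ∈ Finset.range n, (FS^[j] v) 0 = (∑ i, v i - ∑ i, (FS^[n] v) i) / 2 := by
  induction n with
  | zero => simp
  | succ n ih => rw [Finset.sum_range_succ, ih, Function.iterate_succ_apply', sum_FS]; ring

lemma omegaConn_eq_sum_range_add (hv : v ∈ O3) (n : ℕ) :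
    omegaConn v = ∑ j ∈ Finset.range n, (FS^[j] v) 0 + omegaConn (FS^[n] v) := by
  induction n with
  | zero => simp
  | succ n ih =>
    rw [ih, Finset.sum_range_succ, Function.iterate_succ_apply',
      omegaConn_eq_omegaConn_FS_add (iterate_FS_mem_O3 hv n)]
    ring

lemma summable_iterate_FS_zero (hv : v ∈ O3) : Summable fun n => (FS^[n] v) 0 := by
  refine summable_of_sum_range_le (c := (∑ i, v i) / 2) (fun n => (iterate_FS_mem_O3 hv n).1)
    fun n => ?_
  rw [sum_range_iterate_FS_zero]
  have := Finset.sum_nonneg fun i (_ : i ∈ Finset.univ) =>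
    nonneg_of_mem_O3 (iterate_FS_mem_O3 hv n) i
  linarith

lemma iterate_FS_zero_pos (hv : v ∈ F3set) (n : ℕ) : 0 < (FS^[n] v) 0 := by
  have := hv.2 n
  have := (iterate_FS_mem_O3 hv.1 n).2.2
  linarith

/-- Were the largest coordinate bounded below by `c > 0`, the smallest one would eventually be
below `c / 3`, from where on `F` keeps it fixed, contradicting its summability. -/
lemma tendsto_iterate_FS_two (hv : v ∈ F3set) :
    Tendsto (fun n => (FS^[n] v) 2) atTop (𝓝 0) := by
  have hO := iterate_FS_mem_O3 hv.1
  have hanti : Antitone fun n => (FS^[n] v) 2 := antitone_nat_of_succ_le fun n => by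
    rw [Function.iterate_succ_apply']
    exact FS_two_le (hO n)
  have hbdd : BddBelow (Set.range fun n => (FS^[n] v) 2) :=
    ⟨0, by rintro _ ⟨n, rfl⟩; exact nonneg_of_mem_O3 (hO n) 2⟩
  convert tendsto_atTop_ciInf hanti hbdd
  set c := ⨅ n, (FS^[n] v) 2
  by_contra! hc
  have hcpos : 0 < c := lt_of_le_of_ne (le_ciInf fun n => nonneg_of_mem_O3 (hO n) 2) hc
  have hlim := (summable_iterate_FS_zero hv.1).tendsto_atTop_zero
  obtain ⟨N, hN⟩ := eventually_atTop.1 (hlim.eventually_lt_const (by positivity : 0 < c / 3))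
  have hconst : ∀ n, N ≤ n → (FS^[n] v) 0 = (FS^[N] v) 0 := fun n hn => by
    induction n, hn using Nat.le_induction with
    | base => rfl
    | succ n hn ih =>
      rw [Function.iterate_succ_apply', ← ih]
      exact FS_zero_eq (hO n) (by linarith [hN n hn, ciInf_le hbdd n]) (hv.2 n)
  have := tendsto_nhds_unique (tendsto_atTop_of_eventually_const hconst) hlim
  exact (iterate_FS_zero_pos hv N).ne' this

lemma tendsto_sum_iterate_FS (hv : v ∈ F3set) :
    Tendsto (fun n => ∑ i, (FS^[n] v) i) atTop (𝓝 0) := by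
  have hO := iterate_FS_mem_O3 hv.1
  refine squeeze_zero (fun n => Finset.sum_nonneg fun i _ => nonneg_of_mem_O3 (hO n) i)
    (fun n => ?_) (by simpa using (tendsto_iterate_FS_two hv).const_mul 3)
  obtain ⟨h0, h01, h12⟩ := hO n
  simp only [Fin.sum_univ_three]
  linarith

theorem omegaConn_eq_of_mem_F3set (hv : v ∈ F3set) :
    omegaConn v = ∑' n, (FS^[n] v) 0 ∧ omegaConn v = (∑ i, v i) / 2 := by
  have hO := iterate_FS_mem_O3 hv.1
  have hpartial : Tendsto (fun n => ∑ j ∈ Finset.range n, (FS^[j] v) 0) atTop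
      (𝓝 ((∑ i, v i) / 2)) := by
    simp_rw [sum_range_iterate_FS_zero]
    simpa using ((tendsto_sum_iterate_FS hv).const_sub (∑ i, v i)).div_const 2
  have hsum : HasSum (fun n => (FS^[n] v) 0) ((∑ i, v i) / 2) :=
    (hasSum_iff_tendsto_nat_of_nonneg (fun n => (hO n).1) _).2 hpartial
  have htail : Tendsto (fun n => omegaConn (FS^[n] v)) atTop (𝓝 0) :=
    squeeze_zero (fun n => omegaConn_nonneg _)
      (fun n => omegaConn_le_two_mul_sum (nonneg_of_mem_O3 (hO n)))
      (by simpa using (tendsto_sum_iterate_FS hv).const_mul 2)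
  have hΩ : omegaConn v = (∑ i, v i) / 2 := by
    refine tendsto_nhds_unique (tendsto_const_nhds (x := omegaConn v) (f := (atTop : Filter ℕ))) ?_
    simpa [← omegaConn_eq_sum_range_add hv.1] using hpartial.add htail
  exact ⟨hΩ.trans hsum.tsum_eq.symm, hΩ⟩

end FullySubtractiveOrbit

/-- `P(v,ω)` is 2-connected iff `P(F(v), ω − v₁)` is; consequently
`Ω(v) = Ω(F(v)) + v₁`; and if `v ∈ F₃` then `Ω(v) = Σ v₁⁽ⁿ⁾ = ‖v‖₁/2`. -/
theorem connecting_thickness_step (v : R3) (hv : v ∈ O3) (ω : ℝ) :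
    (Connected3 (Plane v ω) ↔ Connected3 (Plane (FS v) (ω - v 0))) ∧
    omegaConn v = omegaConn (FS v) + v 0 ∧
    (v ∈ F3set →
      omegaConn v = ∑' n : ℕ, (FS^[n] v) 0 ∧
      omegaConn v = (v 0 + v 1 + v 2) / 2) := by
  refine ⟨connected3_plane_iff_FS hv ω, omegaConn_eq_omegaConn_FS_add hv, fun hF => ?_⟩
  rw [← Fin.sum_univ_three]
  exact omegaConn_eq_of_mem_F3set hF
end
end

section
/- Let v ∈ F₃ and let (Tₙ)ₙ be the associated sequence of subsets of ℤ³. Then for every n ∈ ℕ, the set Tₙ is 2-connected. -/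
open Matrix
open scoped Classical

noncomputable section

/-!
Let `Pₙ = M₁ ⋯ Mₙ`. Since `((Pₙ)ᵀ)⁻¹ e₁` is the first row of `Pₙ⁻¹`, the set `T_{n+1}` is the union
of `Tₙ` and its translate by that row. By induction, for every row `r` of `Pₙ⁻¹` the translate
`Tₙ + r` contains a point 2-adjacent to `0`: the rows of `P_{n+1}⁻¹ = M_{i_{n+1}}⁻¹ Pₙ⁻¹` are rows
`r` of `Pₙ⁻¹` or differences `r − a` with `a` the first row, and `T_{n+1} + (r − a) ⊇ Tₙ + r`.
As `0 ∈ Tₙ`, the two 2-connected pieces `Tₙ` and `Tₙ + a` of `T_{n+1}` are then joined by an edge.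
-/

lemma adj3_comm {x y : Z3} : adj3 x y ↔ adj3 y x := by
  simp only [adj3, abs_sub_comm (x _)]

lemma adj3_add_right {x y : Z3} (t : Z3) : adj3 (x + t) (y + t) ↔ adj3 x y := by
  simp only [adj3, Pi.add_apply, add_sub_add_right_eq_sub]

lemma connected3_singleton (x : Z3) : Connected3 {x} :=
  ⟨Set.singleton_nonempty x, by rintro _ rfl _ rfl; rfl⟩

lemma Connected3.union {A B : Set Z3} (hA : Connected3 A) (hB : Connected3 B)
    {a b : Z3} (ha : a ∈ A) (hb : b ∈ B) (hab : adj3 a b) :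
    Connected3 (A ∪ B) := by
  have liftA : ∀ {x y}, Relation.ReflTransGen (fun a b => b ∈ A ∧ adj3 a b) x y →
      Relation.ReflTransGen (fun a b => b ∈ A ∪ B ∧ adj3 a b) x y :=
    fun h => Relation.ReflTransGen.mono (fun _ _ h => ⟨Or.inl h.1, h.2⟩) _ _ h
  have liftB : ∀ {x y}, Relation.ReflTransGen (fun a b => b ∈ B ∧ adj3 a b) x y →
      Relation.ReflTransGen (fun a b => b ∈ A ∪ B ∧ adj3 a b) x y :=
    fun h => Relation.ReflTransGen.mono (fun _ _ h => ⟨Or.inr h.1, h.2⟩) _ _ h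
  refine ⟨⟨a, Or.inl ha⟩, ?_⟩
  rintro x (hx | hx) y (hy | hy)
  · exact liftA (hA.2 x hx y hy)
  · exact ((liftA (hA.2 x hx a ha)).tail ⟨Or.inr hb, hab⟩).trans (liftB (hB.2 b hb y hy))
  · exact ((liftB (hB.2 x hx b hb)).tail ⟨Or.inl ha, adj3_comm.1 hab⟩).trans
      (liftA (hA.2 a ha y hy))
  · exact liftB (hB.2 x hx y hy)

lemma Connected3.image_add {A : Set Z3} (hA : Connected3 A) (t : Z3) :
    Connected3 ((· + t) '' A) := by
  refine ⟨hA.1.image _, ?_⟩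
  rintro _ ⟨x, hx, rfl⟩ _ ⟨y, hy, rfl⟩
  refine Relation.ReflTransGen.lift (· + t) ?_ _ _ (hA.2 x hx y hy)
  rintro a b ⟨hb, hab⟩
  exact ⟨⟨b, hb, rfl⟩, (adj3_add_right t).2 hab⟩

lemma zero_mem_Tseq (v : R3) (n : ℕ) : (0 : Z3) ∈ Tseq v n := by
  induction n with
  | zero => rfl
  | succ n ih => exact Or.inl ih

lemma prodM_succ (v : R3) (n : ℕ) :
    prodM v (n + 1) = prodM v n * Mmat (FSidx (FS^[n] v)) := by
  simp [prodM, List.range_succ]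

lemma transVec_eq_inv_prodM_row (v : R3) (n : ℕ) : transVec v n = (prodM v n)⁻¹ 0 := by
  have he1 : e1 = Pi.single 0 1 := by decide
  rw [transVec, ← transpose_nonsing_inv, he1, mulVec_single_one]
  rfl

lemma inv_Mmat_row (k i : Fin 3) :
    ∃ j, (Mmat k)⁻¹ i = Pi.single j 1 ∨ (Mmat k)⁻¹ i = Pi.single j 1 - Pi.single 0 1 := by
  have hinv : (Mmat k)⁻¹ =
      ![!![1,0,0; -1,1,0; -1,0,1], !![-1,1,0; 1,0,0; -1,0,1], !![-1,1,0; -1,0,1; 1,0,0]] k :=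
    inv_eq_left_inv (by fin_cases k <;> decide)
  rw [hinv]
  clear hinv
  revert k i
  decide

lemma inv_Mmat_mul_row (k i : Fin 3) (Q : Matrix (Fin 3) (Fin 3) ℤ) :
    ∃ j, ((Mmat k)⁻¹ * Q) i = Q j ∨ ((Mmat k)⁻¹ * Q) i = Q j - Q 0 := by
  obtain ⟨j, hj | hj⟩ := inv_Mmat_row k i <;> refine ⟨j, ?_⟩
  · refine .inl ?_
    rw [mul_apply_eq_vecMul, hj, single_one_vecMul]
    rfl
  · refine .inr ?_
    rw [mul_apply_eq_vecMul, hj, sub_vecMul, single_one_vecMul, single_one_vecMul]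
    rfl

lemma exists_adj_zero_Tseq_add_row (v : R3) (n : ℕ) (i : Fin 3) :
    ∃ p ∈ Tseq v n, adj3 0 (p + (prodM v n)⁻¹ i) := by
  induction n generalizing i with
  | zero =>
    have hP : prodM v 0 = 1 := rfl
    refine ⟨0, rfl, ?_⟩
    rw [hP, inv_one]
    fin_cases i <;> unfold adj3 <;> decide
  | succ n ih =>
    rw [prodM_succ, Matrix.mul_inv_rev]
    obtain ⟨j, hj | hj⟩ := inv_Mmat_mul_row (FSidx (FS^[n] v)) i (prodM v n)⁻¹ <;>
      obtain ⟨p, hp, hadj⟩ := ih j <;> rw [hj]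
    · exact ⟨p, Or.inl hp, hadj⟩
    · refine ⟨p + transVec v n, Or.inr ⟨p, hp, rfl⟩, ?_⟩
      rwa [transVec_eq_inv_prodM_row, add_add_sub_cancel]

theorem Tseq_connected_general (v : R3) (n : ℕ) :
    Connected3 (Tseq v n) := by
  induction n with
  | zero => exact connected3_singleton 0
  | succ n ih =>
    obtain ⟨p, hp, hadj⟩ := exists_adj_zero_Tseq_add_row v n 0
    rw [← transVec_eq_inv_prodM_row] at hadj
    exact ih.union (ih.image_add _) (zero_mem_Tseq v n) ⟨p, hp, rfl⟩ hadj

/-- For `v ∈ F₃`, every `Tₙ` is 2-connected. -/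
theorem Tseq_connected (v : R3) (hv : v ∈ F3set) (n : ℕ) :
    Connected3 (Tseq v n) :=
  Tseq_connected_general v n
end
end
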